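/- arXiv:1110.1738 — 2 statements merged into one kernel-verified Lean document; each statement's English description precedes it below -/
import Mathlib

section
/- Let A, B, C, D, E, F be real quadratic forms in three variables with A, D, F negative definite and B, C, E positive definite. If P ∈ ℝ³ is nonzero and (1/2)det(M)(P) ≤ 0, where M = [[2A,B,C],[B,2D,E],[C,E,2F]], then all three of M_A := 4DF - E², M_D := 4AF - C², and M_F := 4AD - B² are strictly positive at P. -/
/-!
Expanding along a row, `(1/2) det M = A·M_A + (BCE - F B² - D C²)`, and the bracket is negative
under the sign conditions. Hence `A·M_A < 0` wherever `(1/2) det M ≤ 0`, and `A < 0` forces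
`M_A > 0`. The determinant is invariant under simultaneous permutation of rows and columns, which
gives `M_D` and `M_F` in the same way.
-/

theorem Matrix.det_fin_three_symm_double_diag {R : Type*} [CommRing R] (a b c d e f : R) :
    Matrix.det !![2*a, b, c; b, 2*d, e; c, e, 2*f] =
      2 * (4*a*d*f + b*c*e - a*e^2 - d*c^2 - f*b^2) := by
  rw [Matrix.det_fin_three]
  simp only [Matrix.of_apply, Matrix.cons_val', Matrix.cons_val_zero, Matrix.cons_val_one,
    Matrix.cons_val_two, Matrix.empty_val', Matrix.cons_val_fin_one, Matrix.head_cons,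
    Matrix.tail_cons, Matrix.head_fin_const]
  ring

theorem minor_pos_of_cubic_nonpos {R : Type*} [CommRing R] [LinearOrder R] [IsStrictOrderedRing R]
    {a b c d e f : R} (ha : a < 0) (hd : d < 0) (hf : f < 0) (hb : 0 < b) (hc : 0 < c)
    (he : 0 < e) (h : 4*a*d*f + b*c*e - a*e^2 - d*c^2 - f*b^2 ≤ 0) :
    0 < 4*d*f - e^2 := by
  have hrest : b*c*e - f*b^2 - d*c^2 > 0 := by
    have := mul_pos (mul_pos hb hc) he
    have := mul_neg_of_neg_of_pos hf (pow_pos hb 2)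
    have := mul_neg_of_neg_of_pos hd (pow_pos hc 2)
    linarith
  refine pos_of_mul_neg_right (a := a) ?_ ha.le
  linarith

theorem stmt_2_general (A B C D E F : (Fin 3 → ℝ) → ℝ)
    (hA : ∀ x, x ≠ 0 → A x < 0)
    (hD : ∀ x, x ≠ 0 → D x < 0)
    (hF : ∀ x, x ≠ 0 → F x < 0)
    (hB : ∀ x, x ≠ 0 → 0 < B x)
    (hC : ∀ x, x ≠ 0 → 0 < C x)
    (hE : ∀ x, x ≠ 0 → 0 < E x)
    (P : Fin 3 → ℝ) (hP : P ≠ 0)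
    (hle : (1/2 : ℝ) * Matrix.det !![2*A P, B P, C P; B P, 2*D P, E P; C P, E P, 2*F P] ≤ 0) :
    0 < 4 * D P * F P - (E P)^2 ∧
    0 < 4 * A P * F P - (C P)^2 ∧
    0 < 4 * A P * D P - (B P)^2 := by
  rw [Matrix.det_fin_three_symm_double_diag] at hle
  have ha := hA P hP; have hd := hD P hP; have hf := hF P hP
  have hb := hB P hP; have hc := hC P hP; have he := hE P hP
  exact ⟨minor_pos_of_cubic_nonpos ha hd hf hb hc he (by linarith),
    minor_pos_of_cubic_nonpos hd ha hf hb he hc (by linarith),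
    minor_pos_of_cubic_nonpos hf ha hd hc he hb (by linarith)⟩

/-- If A,D,F are negative definite and B,C,E positive definite real
quadratic forms in three variables, P ≠ 0, and (1/2)·det M (P) ≤ 0 for
M = [[2A,B,C],[B,2D,E],[C,E,2F]], then M_A = 4DF-E², M_D = 4AF-C², M_F = 4AD-B²
are all strictly positive at P. -/
theorem stmt_2 (A B C D E F : (Fin 3 → ℝ) → ℝ)
    (hA2 : ∀ (c : ℝ) x, A (c • x) = c^2 * A x)
    (hB2 : ∀ (c : ℝ) x, B (c • x) = c^2 * B x)
    (hC2 : ∀ (c : ℝ) x, C (c • x) = c^2 * C x)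
    (hD2 : ∀ (c : ℝ) x, D (c • x) = c^2 * D x)
    (hE2 : ∀ (c : ℝ) x, E (c • x) = c^2 * E x)
    (hF2 : ∀ (c : ℝ) x, F (c • x) = c^2 * F x)
    (hA : ∀ x, x ≠ 0 → A x < 0)
    (hD : ∀ x, x ≠ 0 → D x < 0)
    (hF : ∀ x, x ≠ 0 → F x < 0)
    (hB : ∀ x, x ≠ 0 → 0 < B x)
    (hC : ∀ x, x ≠ 0 → 0 < C x)
    (hE : ∀ x, x ≠ 0 → 0 < E x)
    (P : Fin 3 → ℝ) (hP : P ≠ 0)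
    (hle : (1/2 : ℝ) * Matrix.det !![2*A P, B P, C P; B P, 2*D P, E P; C P, E P, 2*F P] ≤ 0) :
    0 < 4 * D P * F P - (E P)^2 ∧
    0 < 4 * A P * F P - (C P)^2 ∧
    0 < 4 * A P * D P - (B P)^2 :=
  stmt_2_general A B C D E F hA hD hF hB hC hE P hP hle
end

section
/- Let k be a field of characteristic ≠ 2 and let W ⊂ ℙ² × ℙ² be a hypersurface of bidegree (2,2) given by A y₀² + B y₀y₁ + C y₀y₂ + D y₁² + E y₁y₂ + F y₂² = 0 with A,...,F quadratic forms in x₀,x₁,x₂. If w ∈ W is a singular point, then its image under the first projection is a singular point of the discriminant sextic C₁ : det[[2A,B,C],[B,2D,E],[C,E,2F]] = 0. -/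
/-!
Write `Q(x)` for the symmetric matrix `[[2A,B,C],[B,2D,E],[C,E,2F]]`, so that the equation of `W`
is `yᵀ Q(x) y = 0`. The `y`-partials vanishing says `Q(x) y = 0` with `y ≠ 0`, hence
`det Q(x) = 0`. By Jacobi's formula `∂ᵢ det Q = tr (adj Q · ∂ᵢ Q)`. Since the rows of `Q(x)` are
orthogonal to `y`, every column of `adj Q(x)` (a cross product of two rows) is parallel to `y`;
as `adj Q(x)` is symmetric it is a multiple of `y yᵀ`, so `tr (adj Q(x) · ∂ᵢ Q(x))` is a multiple
of `yᵀ ∂ᵢQ(x) y`, which vanishes because the `x`-partials do.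
-/

open MvPolynomial Matrix

theorem Derivation.map_det_fin_three {R A : Type*} [CommRing R] [CommRing A] [Algebra R A]
    (D : Derivation R A A) (M : Matrix (Fin 3) (Fin 3) A) :
    D M.det = trace (adjugate M * M.map D) := by
  simp only [det_fin_three, adjugate_fin_three, trace_fin_three, mul_apply, Fin.sum_univ_three,
    map_apply, map_add, map_sub, Derivation.leibniz, smul_eq_mul, Fin.isValue, of_apply, cons_val',
    cons_val_zero, cons_val_fin_one, cons_val_one, cons_val]
  ring

theorem Matrix.transpose_adjugate_fin_three {R : Type*} [CommRing R]
    (M : Matrix (Fin 3) (Fin 3) R) :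
    (adjugate M)ᵀ = ![M 1 ⨯₃ M 2, M 2 ⨯₃ M 0, M 0 ⨯₃ M 1] := by
  ext i j
  fin_cases i <;> fin_cases j <;> simp [adjugate_fin_three, cross_apply] <;> ring

theorem Matrix.cross_transpose_adjugate_eq_zero {R : Type*} [CommRing R]
    {M : Matrix (Fin 3) (Fin 3) R} {y : Fin 3 → R} (hy : M *ᵥ y = 0) (b : Fin 3) :
    y ⨯₃ (adjugate M)ᵀ b = 0 := by
  have hrow : ∀ i, M i ⬝ᵥ y = 0 := fun i => congrFun hy i
  rw [transpose_adjugate_fin_three]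
  fin_cases b <;> simp [cross_cross_eq_smul_sub_smul', dotProduct_comm y, hrow]

theorem mul_eq_mul_of_cross_eq_zero {R : Type*} [CommRing R] {u v : Fin 3 → R}
    (h : u ⨯₃ v = 0) (a c : Fin 3) : u c * v a = u a * v c := by
  have h0 := congrFun h 0
  have h1 := congrFun h 1
  have h2 := congrFun h 2
  simp only [cross_apply, Pi.zero_apply, Fin.isValue, cons_val] at h0 h1 h2
  fin_cases a <;> fin_cases c <;> grind

theorem Matrix.sq_mul_trace_mul_eq {n R : Type*} [Fintype n] [CommRing R]
    {P : Matrix n n R} (hP : Pᵀ = P) {y : n → R} (hy : ∀ a b c, y c * P a b = y a * P c b)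
    (N : Matrix n n R) (j : n) :
    y j ^ 2 * trace (P * N) = P j j * (y ⬝ᵥ (N *ᵥ y)) := by
  have hsymm : ∀ a b, P a b = P b a := fun a b => by rw [← transpose_apply P, hP]
  have key : ∀ a b, y j ^ 2 * P a b = P j j * (y a * y b) := fun a b => by
    calc y j ^ 2 * P a b = y j * (y a * P j b) := by rw [← hy]; ring
      _ = y a * (y j * P b j) := by rw [hsymm]; ring
      _ = y a * (y b * P j j) := by rw [hy]
      _ = P j j * (y a * y b) := by ring
  simp only [trace, diag_apply, mul_apply, dotProduct, mulVec, Finset.mul_sum]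
  rw [Finset.sum_comm]
  exact Finset.sum_congr rfl fun a _ => Finset.sum_congr rfl fun b _ => by
    linear_combination N a b * key b a

theorem Matrix.trace_adjugate_mul_eq_zero_fin_three {K : Type*} [Field K]
    {M : Matrix (Fin 3) (Fin 3) K} (hM : Mᵀ = M) {y : Fin 3 → K} (hMy : M *ᵥ y = 0) (hy : y ≠ 0)
    {N : Matrix (Fin 3) (Fin 3) K} (hN : y ⬝ᵥ (N *ᵥ y) = 0) :
    trace (adjugate M * N) = 0 := by
  obtain ⟨j, hj⟩ := Function.ne_iff.1 hy
  have h := sq_mul_trace_mul_eq (P := adjugate M) (by rw [adjugate_transpose, hM])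
    (fun a b c => mul_eq_mul_of_cross_eq_zero (cross_transpose_adjugate_eq_zero hMy b) a c) N j
  rw [hN, mul_zero] at h
  exact (mul_eq_zero.1 h).resolve_left (pow_ne_zero 2 hj)

theorem stmt_16_general (k : Type*) [Field k]
    (A B C D E F : MvPolynomial (Fin 3) k)
    (x y : Fin 3 → k) (hy : y ≠ 0)
    -- all x-partials of the defining equation vanish at (x,y):
    (hdx : ∀ i : Fin 3,
      eval x (pderiv i A) * (y 0)^2 + eval x (pderiv i B) * (y 0 * y 1)
        + eval x (pderiv i C) * (y 0 * y 2) + eval x (pderiv i D) * (y 1)^2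
        + eval x (pderiv i E) * (y 1 * y 2) + eval x (pderiv i F) * (y 2)^2 = 0)
    -- all y-partials of the defining equation vanish at (x,y):
    (hdy0 : 2 * eval x A * y 0 + eval x B * y 1 + eval x C * y 2 = 0)
    (hdy1 : eval x B * y 0 + 2 * eval x D * y 1 + eval x E * y 2 = 0)
    (hdy2 : eval x C * y 0 + eval x E * y 1 + 2 * eval x F * y 2 = 0) :
    eval x (Matrix.det !![2*A, B, C; B, 2*D, E; C, E, 2*F]) = 0 ∧
    ∀ i : Fin 3, eval x (pderiv i (Matrix.det !![2*A, B, C; B, 2*D, E; C, E, 2*F])) = 0 := by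
  set Q := !![2*A, B, C; B, 2*D, E; C, E, 2*F]
  have hQ_symm : (Q.map (eval x))ᵀ = Q.map (eval x) := by
    ext a b
    fin_cases a <;> fin_cases b <;> rfl
  have hQy : Q.map (eval x) *ᵥ y = 0 := by
    ext a
    fin_cases a <;> simp only [Q, mulVec, dotProduct, Fin.sum_univ_three, map_apply, of_apply,
      cons_val', cons_val_fin_one, cons_val_zero, cons_val_one, cons_val, map_mul, eval_ofNat,
      Pi.zero_apply, Fin.isValue, Fin.zero_eta, Fin.mk_one, Fin.reduceFinMk]
    · linear_combination hdy0
    · linear_combination hdy1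
    · linear_combination hdy2
  refine ⟨?_, fun i => ?_⟩
  · rw [RingHom.map_det]
    exact exists_mulVec_eq_zero_iff.1 ⟨y, hy, hQy⟩
  · rw [Derivation.map_det_fin_three, AddMonoidHom.map_trace, Matrix.map_mul,
      ← RingHom.mapMatrix_apply, RingHom.map_adjugate]
    refine trace_adjugate_mul_eq_zero_fin_three hQ_symm hQy hy ?_
    simp only [Q, dotProduct, mulVec, two_mul, map_apply, of_apply, cons_val', cons_val_fin_one,
      Fin.sum_univ_three, Fin.isValue, cons_val_zero, cons_val_one, cons_val, map_add]
    linear_combination 2 * hdx i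

/-- Let W ⊂ ℙ²×ℙ² be the bidegree (2,2) hypersurface
A y₀² + B y₀y₁ + C y₀y₂ + D y₁² + E y₁y₂ + F y₂² = 0, with A,…,F quadratic forms
in x₀,x₁,x₂ over a field k of characteristic ≠ 2.  If (x,y) (with x ≠ 0, y ≠ 0
affine representatives) is a singular point of W — i.e. the defining equation and
all its partial derivatives in the x- and y-variables vanish there — then x is a
singular point of the discriminant sextic
C₁ : det [[2A,B,C],[B,2D,E],[C,E,2F]] = 0. -/
theorem stmt_16 (k : Type*) [Field k] (hchar : ringChar k ≠ 2)
    (A B C D E F : MvPolynomial (Fin 3) k)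
    (hA : A.IsHomogeneous 2) (hB : B.IsHomogeneous 2) (hC : C.IsHomogeneous 2)
    (hD : D.IsHomogeneous 2) (hE : E.IsHomogeneous 2) (hF : F.IsHomogeneous 2)
    (x y : Fin 3 → k) (hx : x ≠ 0) (hy : y ≠ 0)
    -- (x,y) lies on W:
    (hW : eval x A * (y 0)^2 + eval x B * (y 0 * y 1) + eval x C * (y 0 * y 2)
        + eval x D * (y 1)^2 + eval x E * (y 1 * y 2) + eval x F * (y 2)^2 = 0)
    -- all x-partials of the defining equation vanish at (x,y):
    (hdx : ∀ i : Fin 3,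
      eval x (pderiv i A) * (y 0)^2 + eval x (pderiv i B) * (y 0 * y 1)
        + eval x (pderiv i C) * (y 0 * y 2) + eval x (pderiv i D) * (y 1)^2
        + eval x (pderiv i E) * (y 1 * y 2) + eval x (pderiv i F) * (y 2)^2 = 0)
    -- all y-partials of the defining equation vanish at (x,y):
    (hdy0 : 2 * eval x A * y 0 + eval x B * y 1 + eval x C * y 2 = 0)
    (hdy1 : eval x B * y 0 + 2 * eval x D * y 1 + eval x E * y 2 = 0)
    (hdy2 : eval x C * y 0 + eval x E * y 1 + 2 * eval x F * y 2 = 0) :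
    eval x (Matrix.det !![2*A, B, C; B, 2*D, E; C, E, 2*F]) = 0 ∧
    ∀ i : Fin 3, eval x (pderiv i (Matrix.det !![2*A, B, C; B, 2*D, E; C, E, 2*F])) = 0 :=
  stmt_16_general k A B C D E F x y hy hdx hdy0 hdy1 hdy2
end
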